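/- arXiv:2104.02508 — 2 statements merged into one kernel-verified Lean document; each statement's English description precedes it below -/
import Mathlib

section
/- For every pair of integers (n,p) and every continuously differentiable function φ : [−1,1] → ℝ with φ(−1) = φ(1) = 0, one has ∫_{−1}^{1} (φ'(x)² + (px+n)² φ(x)²) dx ≥ (1/4)(|p|+1) ∫_{−1}^{1} φ(x)² dx; moreover, if in addition |n| ≥ 2|p|, then ∫_{−1}^{1} (φ'(x)² + (px+n)² φ(x)²) dx ≥ (n²/4) ∫_{−1}^{1} φ(x)² dx. -/
/-!
Complete the square with an affine weight `w x = c x + d`: in `0 ≤ ∫ (φ' + w φ)²` the cross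
term `w (φ²)'` integrates by parts to `-c ∫ φ²`, since `φ` vanishes at the ends, so
`c ∫ φ² ≤ ∫ φ'² + ∫ w² φ²`. With `w = ±(p x + n)` this bounds the form below by `|p| ∫ φ²`;
with `w = x / 2`, where `w² ≤ 1/4`, it gives the Poincaré bound `∫ φ² / 4 ≤ ∫ φ'²`. As `p` is
an integer, either `p = 0` or `(|p| + 1) / 4 ≤ |p|`. The second bound is pointwise:
`|p x + n| ≥ |n| - |p| ≥ |n| / 2` on `[-1, 1]`.
-/

open MeasureTheory Real Set

section DirichletForm

variable {φ : ℝ → ℝ} {a b : ℝ}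

lemma integral_deriv_add_affine_mul_sq (hφ : ContDiff ℝ 1 φ) (ha : φ a = 0) (hb : φ b = 0)
    (c d : ℝ) :
    ∫ x in a..b, (deriv φ x + (c * x + d) * φ x) ^ 2 =
      (∫ x in a..b, deriv φ x ^ 2) + (∫ x in a..b, (c * x + d) ^ 2 * φ x ^ 2)
        - c * ∫ x in a..b, φ x ^ 2 := by
  have hφc : Continuous φ := hφ.continuous
  have hφ' : Continuous (deriv φ) := hφ.continuous_deriv le_rfl
  have hF : ∀ x, HasDerivAt (fun x => (c * x + d) * φ x ^ 2)
      (c * φ x ^ 2 + (c * x + d) * (2 * φ x * deriv φ x)) x := by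
    intro x
    have hφx := ((hφ.differentiable one_ne_zero) x).hasDerivAt
    refine ((((hasDerivAt_id x).const_mul c).add_const d).mul (hφx.fun_pow 2)).congr_deriv ?_
    simp only [id]
    ring
  have hF_int : ∫ x in a..b, (c * φ x ^ 2 + (c * x + d) * (2 * φ x * deriv φ x)) = 0 := by
    rw [intervalIntegral.integral_eq_sub_of_hasDerivAt (fun x _ => hF x)
      ((by fun_prop : Continuous _).intervalIntegrable _ _), ha, hb]
    ring
  calc ∫ x in a..b, (deriv φ x + (c * x + d) * φ x) ^ 2
      = ∫ x in a..b, (deriv φ x ^ 2 + (c * x + d) ^ 2 * φ x ^ 2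
          + (c * φ x ^ 2 + (c * x + d) * (2 * φ x * deriv φ x)) - c * φ x ^ 2) := by
        congr 1; funext x; ring
    _ = _ := by
        rw [intervalIntegral.integral_sub, intervalIntegral.integral_add,
          intervalIntegral.integral_add, hF_int, intervalIntegral.integral_const_mul]
        · ring
        all_goals exact (by fun_prop : Continuous _).intervalIntegrable _ _

lemma mul_integral_sq_le_integral_deriv_sq_add (hφ : ContDiff ℝ 1 φ) (hab : a ≤ b)
    (ha : φ a = 0) (hb : φ b = 0) (c d : ℝ) :
    c * ∫ x in a..b, φ x ^ 2 ≤
      (∫ x in a..b, deriv φ x ^ 2) + ∫ x in a..b, (c * x + d) ^ 2 * φ x ^ 2 := by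
  have := intervalIntegral.integral_nonneg (μ := volume) hab
    fun x _ => sq_nonneg (deriv φ x + (c * x + d) * φ x)
  rw [integral_deriv_add_affine_mul_sq hφ ha hb c d] at this
  linarith

lemma abs_mul_integral_sq_le_integral_deriv_sq_add (hφ : ContDiff ℝ 1 φ) (hab : a ≤ b)
    (ha : φ a = 0) (hb : φ b = 0) (c d : ℝ) :
    |c| * ∫ x in a..b, φ x ^ 2 ≤
      (∫ x in a..b, deriv φ x ^ 2) + ∫ x in a..b, (c * x + d) ^ 2 * φ x ^ 2 := by
  rcases abs_cases c with ⟨hc, -⟩ | ⟨hc, -⟩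
  · rw [hc]
    exact mul_integral_sq_le_integral_deriv_sq_add hφ hab ha hb c d
  · have h := mul_integral_sq_le_integral_deriv_sq_add hφ hab ha hb (-c) (-d)
    simp only [neg_mul, ← neg_add, neg_sq] at h
    rwa [hc, neg_mul]

lemma integral_mul_sq_le_integral_mul_sq {g h : ℝ → ℝ} (hφ : Continuous φ) (hg : Continuous g)
    (hh : Continuous h) (hab : a ≤ b) (hgh : ∀ x ∈ Icc a b, g x ≤ h x) :
    ∫ x in a..b, g x * φ x ^ 2 ≤ ∫ x in a..b, h x * φ x ^ 2 :=
  intervalIntegral.integral_mono_on hab ((by fun_prop : Continuous _).intervalIntegrable _ _)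
    ((by fun_prop : Continuous _).intervalIntegrable _ _)
    fun x hx => mul_le_mul_of_nonneg_right (hgh x hx) (sq_nonneg _)

lemma integral_sq_div_sq_le_integral_deriv_sq (hφ : ContDiff ℝ 1 φ) (hab : a < b)
    (ha : φ a = 0) (hb : φ b = 0) :
    (∫ x in a..b, φ x ^ 2) / (b - a) ^ 2 ≤ ∫ x in a..b, deriv φ x ^ 2 := by
  set c := 2 / (b - a) ^ 2
  have hc : c * (b - a) ^ 2 = 2 := div_mul_cancel₀ _ (pow_ne_zero 2 (sub_ne_zero.mpr hab.ne'))
  have hweight : ∀ x ∈ Icc a b, (c * x + -(c * (a + b) / 2)) ^ 2 ≤ c / 2 := by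
    intro x ⟨hax, hxb⟩
    have hsq : c / 2 - (c * x + -(c * (a + b) / 2)) ^ 2 = c ^ 2 * ((x - a) * (b - x)) := by
      linear_combination (-c / 4) * hc
    linarith [mul_nonneg (sq_nonneg c) (mul_nonneg (sub_nonneg.mpr hax) (sub_nonneg.mpr hxb))]
  have hmain := mul_integral_sq_le_integral_deriv_sq_add hφ hab.le ha hb c (-(c * (a + b) / 2))
  have hcompare := integral_mul_sq_le_integral_mul_sq hφ.continuous (by fun_prop)
    continuous_const hab.le hweight
  rw [intervalIntegral.integral_const_mul] at hcompare
  have hA : (∫ x in a..b, φ x ^ 2) / (b - a) ^ 2 = c / 2 * ∫ x in a..b, φ x ^ 2 := by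
    simp only [c]
    ring
  linarith

end DirichletForm

lemma sq_div_four_le_mul_add_sq {p n x : ℝ} (hpn : 2 * |p| ≤ |n|) (hx : |x| ≤ 1) :
    n ^ 2 / 4 ≤ (p * x + n) ^ 2 := by
  have hpx : |p * x| ≤ |p| := by
    rw [abs_mul]
    exact mul_le_of_le_one_right (abs_nonneg p) hx
  have hlow : |n| / 2 ≤ |p * x + n| := by
    have := abs_sub_abs_le_abs_sub n (-(p * x))
    rw [abs_neg, sub_neg_eq_add, add_comm n] at this
    linarith
  calc n ^ 2 / 4 = (|n| / 2) ^ 2 := by rw [div_pow, sq_abs]; ring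
    _ ≤ |p * x + n| ^ 2 := pow_le_pow_left₀ (by positivity) hlow 2
    _ = (p * x + n) ^ 2 := sq_abs _

/-- lower bounds for the variational first Dirichlet eigenvalue of
`-d²/dx² + (px+n)²` on `(-1,1)`. -/
theorem heisenberg_dissipation_speed (n p : ℤ) (φ : ℝ → ℝ) (hφ : ContDiff ℝ 1 φ)
    (hb1 : φ (-1) = 0) (hb2 : φ 1 = 0) :
    (1 / 4 * (|(p : ℝ)| + 1) * ∫ x in (-1:ℝ)..1, φ x ^ 2)
      ≤ (∫ x in (-1:ℝ)..1, (deriv φ x ^ 2 + ((p : ℝ) * x + (n : ℝ)) ^ 2 * φ x ^ 2)) ∧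
    (2 * |(p : ℝ)| ≤ |(n : ℝ)| →
      ((n : ℝ) ^ 2 / 4 * ∫ x in (-1:ℝ)..1, φ x ^ 2)
        ≤ ∫ x in (-1:ℝ)..1, (deriv φ x ^ 2 + ((p : ℝ) * x + (n : ℝ)) ^ 2 * φ x ^ 2)) := by
  have hφc : Continuous φ := hφ.continuous
  have hφ' : Continuous (deriv φ) := hφ.continuous_deriv le_rfl
  rw [intervalIntegral.integral_add ((by fun_prop : Continuous _).intervalIntegrable _ _)
    ((by fun_prop : Continuous _).intervalIntegrable _ _)]
  have hA : 0 ≤ ∫ x in (-1:ℝ)..1, φ x ^ 2 :=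
    intervalIntegral.integral_nonneg (by norm_num) fun x _ => sq_nonneg _
  have hJ : 0 ≤ ∫ x in (-1:ℝ)..1, ((p : ℝ) * x + n) ^ 2 * φ x ^ 2 :=
    intervalIntegral.integral_nonneg (by norm_num) fun x _ => by positivity
  have hpoincare := integral_sq_div_sq_le_integral_deriv_sq hφ (by norm_num) hb1 hb2
  have hslope := abs_mul_integral_sq_le_integral_deriv_sq_add hφ (by norm_num) hb1 hb2 p n
  norm_num at hpoincare
  refine ⟨?_, fun hpn => ?_⟩
  · obtain hp | hp := eq_or_ne p 0
    · rw [show |(p : ℝ)| = 0 by simp [hp]]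
      linarith
    · have hp1 : (1 : ℝ) ≤ |(p : ℝ)| := by exact_mod_cast Int.one_le_abs hp
      nlinarith
  · have hcompare := integral_mul_sq_le_integral_mul_sq hφc continuous_const (by fun_prop)
      (by norm_num) fun x hx => sq_div_four_le_mul_add_sq hpn (abs_le.mpr hx)
    rw [intervalIntegral.integral_const_mul] at hcompare
    linarith
end

section
/- Let T > 0, let h̃ : [0,T]×[−1,1]×ℝ×ℝ → ℝ be continuous and 2π-periodic in its last two variables, and let g be a classical solution of the Heisenberg heat equation on (0,T)×Ω with source h̃. For n, p ∈ ℤ define the Fourier coefficients g_{n,p}(t,x) = (1/(2π)²) ∫_{−π}^{π}∫_{−π}^{π} g(t,x,y,z) e^{−i(ny+pz)} dy dz and h̃_{n,p}(t,x) = (1/(2π)²) ∫_{−π}^{π}∫_{−π}^{π} h̃(t,x,y,z) e^{−i(ny+pz)} dy dz. Then for every n, p ∈ ℤ, the function g_{n,p} : [0,T]×[−1,1] → ℂ is a classical solution of the 1D heat equation with parameters (n,p) and source h̃_{n,p}, i.e. g_{n,p}(t,−1) = g_{n,p}(t,1) = 0 for all t ∈ [0,T] and ∂_t g_{n,p} −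 ∂_x² g_{n,p} + (px+n)² g_{n,p} = h̃_{n,p} on (0,T)×(−1,1). -/
open MeasureTheory Real Set

/-- Partial derivative in the `y` variable. -/
noncomputable def pdY (g : ℝ → ℝ → ℝ → ℝ → ℝ) : ℝ → ℝ → ℝ → ℝ → ℝ :=
  fun t x y z => deriv (fun y' => g t x y' z) y

/-- Partial derivative in the `z` variable. -/
noncomputable def pdZ (g : ℝ → ℝ → ℝ → ℝ → ℝ) : ℝ → ℝ → ℝ → ℝ → ℝ :=
  fun t x y z => deriv (fun z' => g t x y z') z

/-- The vector field `x ∂_z + ∂_y`. -/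
noncomputable def XH (g : ℝ → ℝ → ℝ → ℝ → ℝ) : ℝ → ℝ → ℝ → ℝ → ℝ :=
  fun t x y z => x * pdZ g t x y z + pdY g t x y z

/-- A classical solution of the Heisenberg heat equation on `(0,T) × Ω`, where
`Ω = (-1,1) × 𝕋 × 𝕋` (`𝕋 = ℝ/2πℤ` represented by `2π`-periodic functions):
`g` is continuous on `[0,T]×[-1,1]×ℝ×ℝ`, smooth on `(0,T]×[-1,1]×ℝ×ℝ`,
`2π`-periodic in `y` and `z`, satisfies `∂_t g = ∂_x² g + (x∂_z+∂_y)² g + h` on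
`(0,T)×(-1,1)×ℝ×ℝ` and the Dirichlet boundary conditions `g(t,±1,y,z) = 0`. -/
def IsHeisenbergSol (T : ℝ) (h g : ℝ → ℝ → ℝ → ℝ → ℝ) : Prop :=
  ContinuousOn (fun q : ℝ × ℝ × ℝ × ℝ => g q.1 q.2.1 q.2.2.1 q.2.2.2)
    (Set.Icc 0 T ×ˢ (Set.Icc (-1:ℝ) 1 ×ˢ (Set.univ : Set (ℝ × ℝ)))) ∧
  ContDiffOn ℝ (⊤ : ℕ∞) (fun q : ℝ × ℝ × ℝ × ℝ => g q.1 q.2.1 q.2.2.1 q.2.2.2)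
    (Set.Ioc 0 T ×ˢ (Set.Icc (-1:ℝ) 1 ×ˢ (Set.univ : Set (ℝ × ℝ)))) ∧
  (∀ t x y z, g t x (y + 2 * π) z = g t x y z ∧ g t x y (z + 2 * π) = g t x y z) ∧
  (∀ t y z, g t (-1) y z = 0 ∧ g t 1 y z = 0) ∧
  ∀ t ∈ Set.Ioo (0:ℝ) T, ∀ x ∈ Set.Ioo (-1:ℝ) 1, ∀ y z : ℝ,
    deriv (fun s => g s x y z) t =
      deriv (deriv fun x' => g t x' y z) x + XH (XH g) t x y z + h t x y z

/-- The `(n,p)`-th Fourier coefficient (in the variables `y, z`) of a function of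
`(t,x,y,z)`:  `f_{n,p}(t,x) = (1/(2π)²) ∫_{-π}^{π} ∫_{-π}^{π} f(t,x,y,z) e^{-i(ny+pz)} dy dz`. -/
noncomputable def fourierCoeffYZ (f : ℝ → ℝ → ℝ → ℝ → ℝ) (n p : ℤ) : ℝ → ℝ → ℂ :=
  fun t x => (1 / (2 * π) ^ 2 : ℂ) *
    ∫ y in (-π)..π, ∫ z in (-π)..π,
      (f t x y z : ℂ) * Complex.exp (-Complex.I * ((n : ℂ) * (y : ℂ) + (p : ℂ) * (z : ℂ)))

namespace HeisenAux


abbrev P4 := ℝ × ℝ × ℝ × ℝ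

noncomputable def ec (k : ℤ) (w : ℝ) : ℂ := Complex.exp (-Complex.I * k * w)

lemma continuous_ec (k : ℤ) : Continuous (ec k) := by
  unfold ec; fun_prop

lemma ec_pi (k : ℤ) : ec k π = ec k (-π) := by
  have h2 : Complex.exp (Complex.I*k*π) * Complex.exp (Complex.I*k*π) = 1 := by
    rw [← Complex.exp_add, show (Complex.I*k*π + Complex.I*k*π : ℂ) = (k:ℂ) * (2*π*Complex.I) by ring]
    exact Complex.exp_int_mul_two_pi_mul_I k
  have h1 : Complex.exp (Complex.I*k*π) * Complex.exp (-(Complex.I*k*π)) = 1 := by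
    rw [← Complex.exp_add]; simp
  have h3 : Complex.exp (Complex.I*k*π) = Complex.exp (-(Complex.I*k*π)) :=
    mul_left_cancel₀ (Complex.exp_ne_zero _) (h2.trans h1.symm)
  unfold ec
  push_cast
  rw [show (-Complex.I*(k:ℂ)*(π:ℂ) : ℂ) = -(Complex.I*k*π) by ring,
      show (-Complex.I*(k:ℂ)*(-(π:ℂ)) : ℂ) = Complex.I*k*π by ring]
  exact h3.symm

lemma hasDerivAt_ec (k : ℤ) (w : ℝ) :
    HasDerivAt (ec k) (-Complex.I * k * ec k w) w := by
  have h0 : HasDerivAt (fun y : ℝ => (y:ℂ)) 1 w := by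
    exact (hasDerivAt_id w).ofReal_comp
  have h1 : HasDerivAt (fun y : ℝ => -Complex.I * k * (y:ℂ)) (-Complex.I * k) w := by
    simpa using h0.const_mul (-Complex.I * (k:ℂ))
  have h2 := h1.cexp
  unfold ec
  convert h2 using 1
  ring

lemma pi_le : (-π:ℝ) ≤ π := by linarith [Real.pi_pos]

/-- Integration by parts against `ec k` on `[-π, π]` for a periodic function. -/
lemma integral_deriv_mul_ec {u u' : ℝ → ℂ} (k : ℤ)
    (hu : ∀ y, HasDerivAt u (u' y) y) (hc : Continuous u') (hper : u π = u (-π)) :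
    ∫ y in (-π:ℝ)..π, u' y * ec k y
      = Complex.I * k * ∫ y in (-π:ℝ)..π, u y * ec k y := by
  have key := intervalIntegral.integral_mul_deriv_eq_deriv_mul
      (a := (-π:ℝ)) (b := π) (u := ec k) (v := u) (u' := fun y => -Complex.I * k * ec k y) (v' := u')
      (fun y _ => hasDerivAt_ec k y) (fun y _ => hu y)
      ((continuous_const.mul (continuous_ec k)).intervalIntegrable _ _)
      (hc.intervalIntegrable _ _)
  have hcomm1 : ∫ y in (-π:ℝ)..π, u' y * ec k y = ∫ y in (-π:ℝ)..π, ec k y * u' y := by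
    apply intervalIntegral.integral_congr; intro y _; ring
  have hb : ec k π * u π - ec k (-π) * u (-π) = 0 := by rw [ec_pi, hper]; ring
  have h2 : ∫ y in (-π:ℝ)..π, -Complex.I * (k:ℂ) * ec k y * u y
      = (-Complex.I*(k:ℂ)) * ∫ y in (-π:ℝ)..π, ec k y * u y := by
    rw [← intervalIntegral.integral_const_mul]
    apply intervalIntegral.integral_congr; intro y _; ring
  have hcomm2 : ∫ y in (-π:ℝ)..π, ec k y * u y = ∫ y in (-π:ℝ)..π, u y * ec k y := by
    apply intervalIntegral.integral_congr; intro y _; ring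
  rw [hcomm1, key, h2, hb, hcomm2]
  ring



noncomputable def pD (v : P4) (F : P4 → ℝ) : P4 → ℝ := fun q => fderiv ℝ F q v

def vT : P4 := (1,0,0,0)
def vX : P4 := (0,1,0,0)
def vY : P4 := (0,0,1,0)
def vZ : P4 := (0,0,0,1)

lemma pD_contDiffOn {F : P4 → ℝ} {U : Set P4} (hU : IsOpen U)
    (hF : ContDiffOn ℝ (⊤ : ℕ∞) F U) (v : P4) : ContDiffOn ℝ (⊤ : ℕ∞) (pD v F) U :=
  (hF.fderiv_of_isOpen hU (by simp)).clm_apply contDiffOn_const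

lemma hasDerivAt_sliceT {F : P4 → ℝ} {t x y z : ℝ} (hF : DifferentiableAt ℝ F (t,x,y,z)) :
    HasDerivAt (fun s => F (s,x,y,z)) (pD vT F (t,x,y,z)) t := by
  have hc : HasDerivAt (fun s : ℝ => ((s,x,y,z) : P4)) vT t :=
    (hasDerivAt_id t).prodMk (hasDerivAt_const t ((x,y,z) : ℝ×ℝ×ℝ))
  exact hF.hasFDerivAt.comp_hasDerivAt t hc

lemma hasDerivAt_sliceX {F : P4 → ℝ} {t x y z : ℝ} (hF : DifferentiableAt ℝ F (t,x,y,z)) :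
    HasDerivAt (fun x' => F (t,x',y,z)) (pD vX F (t,x,y,z)) x := by
  have hc : HasDerivAt (fun x' : ℝ => ((t,x',y,z) : P4)) vX x :=
    (hasDerivAt_const x t).prodMk ((hasDerivAt_id x).prodMk (hasDerivAt_const x ((y,z) : ℝ×ℝ)))
  exact hF.hasFDerivAt.comp_hasDerivAt x hc

lemma hasDerivAt_sliceY {F : P4 → ℝ} {t x y z : ℝ} (hF : DifferentiableAt ℝ F (t,x,y,z)) :
    HasDerivAt (fun y' => F (t,x,y',z)) (pD vY F (t,x,y,z)) y := by
  have hc : HasDerivAt (fun y' : ℝ => ((t,x,y',z) : P4)) vY y :=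
    (hasDerivAt_const y t).prodMk ((hasDerivAt_const y x).prodMk ((hasDerivAt_id y).prodMk (hasDerivAt_const y z)))
  exact hF.hasFDerivAt.comp_hasDerivAt y hc

lemma hasDerivAt_sliceZ {F : P4 → ℝ} {t x y z : ℝ} (hF : DifferentiableAt ℝ F (t,x,y,z)) :
    HasDerivAt (fun z' => F (t,x,y,z')) (pD vZ F (t,x,y,z)) z := by
  have hc : HasDerivAt (fun z' : ℝ => ((t,x,y,z') : P4)) vZ z :=
    (hasDerivAt_const z t).prodMk ((hasDerivAt_const z x).prodMk ((hasDerivAt_const z y).prodMk (hasDerivAt_id z)))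
  exact hF.hasFDerivAt.comp_hasDerivAt z hc

lemma fderiv_shift {f : P4 → ℝ} {a q : P4} (hf : DifferentiableAt ℝ f (q + a))
    (hper : ∀ r, f (r + a) = f r) : fderiv ℝ f (q + a) = fderiv ℝ f q := by
  have h1 : HasFDerivAt (fun p => f (p + a)) (fderiv ℝ f (q + a)) q := by
    have h2 := hf.hasFDerivAt.comp q ((hasFDerivAt_id q).add_const a)
    exact h2
  have h3 : (fun p : P4 => f (p + a)) = f := funext hper
  rw [h3] at h1
  exact h1.fderiv.symm

lemma pD_per {F : P4 → ℝ} {U : Set P4} (hU : IsOpen U) (hF : ContDiffOn ℝ (⊤ : ℕ∞) F U) {a : P4}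
    (hper : ∀ q, F (q + a) = F q) {q : P4} (hq : q + a ∈ U) (v : P4) :
    pD v F (q + a) = pD v F q := by
  unfold pD
  rw [fderiv_shift ((hF.contDiffAt (hU.mem_nhds hq)).differentiableAt (by simp)) hper]

/-- The vector field `x ∂_z + ∂_y` in `fderiv` form. -/
noncomputable def WH (F : P4 → ℝ) : P4 → ℝ := fun q => q.2.1 * pD vZ F q + pD vY F q

lemma WH_contDiffOn {U : Set P4} (hU : IsOpen U) {F : P4 → ℝ}
    (hF : ContDiffOn ℝ (⊤ : ℕ∞) F U) : ContDiffOn ℝ (⊤ : ℕ∞) (WH F) U :=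
  ((contDiff_fst.comp contDiff_snd).contDiffOn.mul (pD_contDiffOn hU hF vZ)).add
    (pD_contDiffOn hU hF vY)

lemma WH_per {F : P4 → ℝ} {U : Set P4} (hU : IsOpen U) (hF : ContDiffOn ℝ (⊤ : ℕ∞) F U) {a : P4}
    (ha : a.2.1 = 0) (hper : ∀ q, F (q + a) = F q) {q : P4} (hq : q + a ∈ U) :
    WH F (q + a) = WH F q := by
  unfold WH
  rw [pD_per hU hF hper hq vZ, pD_per hU hF hper hq vY]
  have : (q + a).2.1 = q.2.1 := by rw [Prod.snd_add, Prod.fst_add, ha, add_zero]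
  rw [this]


noncomputable def μpi : Measure ℝ := volume.restrict (Ioc (-π) π)

def Sq : Set (ℝ × ℝ) := Ioc (-π) π ×ˢ Ioc (-π) π

instance : IsFiniteMeasure μpi :=
  ⟨by rw [μpi, Measure.restrict_apply_univ]; exact measure_Ioc_lt_top⟩

lemma mu2_eq : μpi.prod μpi = (volume : Measure (ℝ × ℝ)).restrict Sq := by
  rw [μpi, Measure.prod_restrict, ← Measure.volume_eq_prod, Sq]

lemma integrable_prod_of_cont (f : ℝ → ℝ → ℂ)
    (hf : Continuous fun yz : ℝ × ℝ => f yz.1 yz.2) :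
    Integrable (fun yz : ℝ × ℝ => f yz.1 yz.2) (μpi.prod μpi) := by
  rw [mu2_eq]
  exact ((hf.continuousOn.integrableOn_compact (isCompact_Icc.prod isCompact_Icc)).mono_set
    (prod_mono Ioc_subset_Icc_self Ioc_subset_Icc_self))

lemma double_eq_prod (f : ℝ → ℝ → ℂ)
    (hf : Continuous fun yz : ℝ × ℝ => f yz.1 yz.2) :
    ∫ y in (-π:ℝ)..π, ∫ z in (-π:ℝ)..π, f y z = ∫ yz, f yz.1 yz.2 ∂(μpi.prod μpi) := by
  rw [intervalIntegral.integral_of_le pi_le]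
  have h1 : ∀ y, ∫ z in (-π:ℝ)..π, f y z = ∫ z in Ioc (-π) π, f y z :=
    fun y => intervalIntegral.integral_of_le pi_le
  simp_rw [h1]
  exact MeasureTheory.integral_integral (integrable_prod_of_cont f hf)

lemma double_swap (f : ℝ → ℝ → ℂ)
    (hf : Continuous fun yz : ℝ × ℝ => f yz.1 yz.2) :
    ∫ y in (-π:ℝ)..π, ∫ z in (-π:ℝ)..π, f y z
      = ∫ z in (-π:ℝ)..π, ∫ y in (-π:ℝ)..π, f y z := by
  simp_rw [intervalIntegral.integral_of_le pi_le]
  exact MeasureTheory.integral_integral_swap (integrable_prod_of_cont f hf)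

lemma double_add (f1 f2 : ℝ → ℝ → ℂ)
    (h1 : Continuous fun yz : ℝ × ℝ => f1 yz.1 yz.2)
    (h2 : Continuous fun yz : ℝ × ℝ => f2 yz.1 yz.2) :
    ∫ y in (-π:ℝ)..π, ∫ z in (-π:ℝ)..π, (f1 y z + f2 y z)
      = (∫ y in (-π:ℝ)..π, ∫ z in (-π:ℝ)..π, f1 y z)
        + ∫ y in (-π:ℝ)..π, ∫ z in (-π:ℝ)..π, f2 y z := by
  have hc1 : ∀ y : ℝ, Continuous (f1 y) := fun y => h1.comp (Continuous.prodMk_right y)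
  have hc2 : ∀ y : ℝ, Continuous (f2 y) := fun y => h2.comp (Continuous.prodMk_right y)
  have inner : ∀ y : ℝ, ∫ z in (-π:ℝ)..π, (f1 y z + f2 y z)
      = (∫ z in (-π:ℝ)..π, f1 y z) + ∫ z in (-π:ℝ)..π, f2 y z := fun y =>
    intervalIntegral.integral_add ((hc1 y).intervalIntegrable _ _) ((hc2 y).intervalIntegrable _ _)
  simp_rw [inner]
  apply intervalIntegral.integral_add
  · exact (intervalIntegral.continuous_parametric_intervalIntegral_of_continuous' h1 _ _).intervalIntegrable _ _
  · exact (intervalIntegral.continuous_parametric_intervalIntegral_of_continuous' h2 _ _).intervalIntegrable _ _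

lemma double_const_mul (c : ℂ) (f : ℝ → ℝ → ℂ) :
    ∫ y in (-π:ℝ)..π, ∫ z in (-π:ℝ)..π, c * f y z
      = c * ∫ y in (-π:ℝ)..π, ∫ z in (-π:ℝ)..π, f y z := by
  simp_rw [intervalIntegral.integral_const_mul]

/-- Differentiation under a double interval integral. -/
lemma hasDerivAt_double {F F' : ℝ → ℝ → ℝ → ℂ} {s₀ ε : ℝ} (hε : 0 < ε)
    (hFc : ContinuousOn (fun q : ℝ × ℝ × ℝ => F q.1 q.2.1 q.2.2)
      (Metric.closedBall s₀ ε ×ˢ (univ : Set (ℝ × ℝ))))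
    (hF'c : ContinuousOn (fun q : ℝ × ℝ × ℝ => F' q.1 q.2.1 q.2.2)
      (Metric.closedBall s₀ ε ×ˢ (univ : Set (ℝ × ℝ))))
    (hd : ∀ s ∈ Metric.ball s₀ ε, ∀ y z : ℝ, HasDerivAt (fun s' => F s' y z) (F' s y z) s) :
    HasDerivAt (fun s => ∫ y in (-π:ℝ)..π, ∫ z in (-π:ℝ)..π, F s y z)
      (∫ y in (-π:ℝ)..π, ∫ z in (-π:ℝ)..π, F' s₀ y z) s₀ := by
  have hslice : ∀ s ∈ Metric.closedBall s₀ ε, Continuous fun yz : ℝ × ℝ => F s yz.1 yz.2 := by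
    intro s hs
    have hemb : Continuous (fun yz : ℝ × ℝ => ((s, yz.1, yz.2) : ℝ × ℝ × ℝ)) := by fun_prop
    exact hFc.comp_continuous hemb (fun yz => ⟨hs, mem_univ _⟩)
  have hslice' : ∀ s ∈ Metric.closedBall s₀ ε, Continuous fun yz : ℝ × ℝ => F' s yz.1 yz.2 := by
    intro s hs
    have hemb : Continuous (fun yz : ℝ × ℝ => ((s, yz.1, yz.2) : ℝ × ℝ × ℝ)) := by fun_prop
    exact hF'c.comp_continuous hemb (fun yz => ⟨hs, mem_univ _⟩)
  obtain ⟨M, hM⟩ := ((isCompact_closedBall s₀ ε).prod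
      (isCompact_Icc.prod isCompact_Icc)).exists_bound_of_continuousOn
      (hF'c.mono (fun q hq => ⟨hq.1, mem_univ _⟩))
  have hae : ∀ᵐ yz : ℝ × ℝ ∂(μpi.prod μpi), yz ∈ Sq := by
    rw [mu2_eq]
    exact ae_restrict_mem (measurableSet_Ioc.prod measurableSet_Ioc)
  have key := hasDerivAt_integral_of_dominated_loc_of_deriv_le (μ := μpi.prod μpi)
      (F := fun s (yz : ℝ × ℝ) => F s yz.1 yz.2) (F' := fun s (yz : ℝ × ℝ) => F' s yz.1 yz.2)
      (x₀ := s₀) (bound := fun _ => M) (Metric.ball_mem_nhds s₀ hε)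
      (by
        filter_upwards [Metric.ball_mem_nhds s₀ hε] with s hs
        exact (hslice s (Metric.ball_subset_closedBall hs)).aestronglyMeasurable)
      (integrable_prod_of_cont _ (hslice s₀ (Metric.mem_closedBall_self hε.le)))
      ((hslice' s₀ (Metric.mem_closedBall_self hε.le)).aestronglyMeasurable)
      (by
        filter_upwards [hae] with yz hyz s hs
        exact hM (s, yz) ⟨Metric.ball_subset_closedBall hs,
          ⟨Ioc_subset_Icc_self hyz.1, Ioc_subset_Icc_self hyz.2⟩⟩)
      (integrable_const M)
      (Filter.Eventually.of_forall fun yz s hs => hd s hs yz.1 yz.2)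
  obtain ⟨-, hkey⟩ := key
  have hev : (fun s => ∫ yz : ℝ × ℝ, F s yz.1 yz.2 ∂(μpi.prod μpi)) =ᶠ[nhds s₀]
      (fun s => ∫ y in (-π:ℝ)..π, ∫ z in (-π:ℝ)..π, F s y z) := by
    filter_upwards [Metric.ball_mem_nhds s₀ hε] with s hs
    exact (double_eq_prod _ (hslice s (Metric.ball_subset_closedBall hs))).symm
  rw [double_eq_prod _ (hslice' s₀ (Metric.mem_closedBall_self hε.le))]
  exact hkey.congr_of_eventuallyEq hev.symm


/-- The double Fourier integral of a function of `q : P4` at fixed `(t,x)`. -/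
noncomputable def JJ (n p : ℤ) (F : P4 → ℝ) (t x : ℝ) : ℂ :=
  ∫ y in (-π:ℝ)..π, ∫ z in (-π:ℝ)..π, (F (t,x,y,z) : ℂ) * ec n y * ec p z

lemma JJ_congr (n p : ℤ) {F1 F2 : P4 → ℝ} (t x : ℝ)
    (h : ∀ y z : ℝ, F1 (t,x,y,z) = F2 (t,x,y,z)) : JJ n p F1 t x = JJ n p F2 t x := by
  unfold JJ
  congr 1
  funext y
  congr 1
  funext z
  rw [h y z]

/-- Continuity of the full integrand from slice continuity. -/
lemma cont_integrand (n p : ℤ) {f : ℝ × ℝ → ℝ} (hf : Continuous f) :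
    Continuous fun yz : ℝ × ℝ => ((f yz : ℝ) : ℂ) * ec n yz.1 * ec p yz.2 :=
  ((Complex.continuous_ofReal.comp hf).mul ((continuous_ec n).comp continuous_fst)).mul
    ((continuous_ec p).comp continuous_snd)

lemma JJ_add (n p : ℤ) (F1 F2 : P4 → ℝ) (t x : ℝ)
    (h1 : Continuous fun yz : ℝ × ℝ => F1 (t,x,yz.1,yz.2))
    (h2 : Continuous fun yz : ℝ × ℝ => F2 (t,x,yz.1,yz.2)) :
    JJ n p (fun q => F1 q + F2 q) t x = JJ n p F1 t x + JJ n p F2 t x := by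
  unfold JJ
  have e : ∀ y z : ℝ, ((F1 (t,x,y,z) + F2 (t,x,y,z) : ℝ) : ℂ) * ec n y * ec p z
      = (F1 (t,x,y,z) : ℂ) * ec n y * ec p z + (F2 (t,x,y,z) : ℂ) * ec n y * ec p z := by
    intro y z; push_cast; ring
  simp_rw [e]
  exact double_add _ _ (cont_integrand n p h1) (cont_integrand n p h2)

lemma JJ_smul (n p : ℤ) (a : ℝ) (F : P4 → ℝ) (t x : ℝ) :
    JJ n p (fun q => a * F q) t x = (a : ℂ) * JJ n p F t x := by
  unfold JJ
  have e : ∀ y z : ℝ, ((a * F (t,x,y,z) : ℝ) : ℂ) * ec n y * ec p z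
      = (a : ℂ) * ((F (t,x,y,z) : ℂ) * ec n y * ec p z) := by
    intro y z; push_cast; ring
  simp_rw [e]
  exact double_const_mul _ _

/-- Integration by parts in `z`. -/
lemma JJ_pDez (n p : ℤ) {U : Set P4} (hU : IsOpen U) {F : P4 → ℝ}
    (hF : ContDiffOn ℝ (⊤ : ℕ∞) F U) {t x : ℝ} (hmem : ∀ y z : ℝ, ((t,x,y,z) : P4) ∈ U)
    (hper : ∀ y : ℝ, F (t,x,y,π) = F (t,x,y,-π)) :
    JJ n p (pD vZ F) t x = Complex.I * p * JJ n p F t x := by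
  unfold JJ
  have hinner : ∀ y : ℝ, (∫ z in (-π:ℝ)..π, (pD vZ F (t,x,y,z) : ℂ) * ec n y * ec p z)
      = Complex.I * p * ∫ z in (-π:ℝ)..π, (F (t,x,y,z) : ℂ) * ec n y * ec p z := by
    intro y
    have hu : ∀ z : ℝ, HasDerivAt (fun z' => (F (t,x,y,z') : ℂ) * ec n y)
        ((pD vZ F (t,x,y,z) : ℂ) * ec n y) z := by
      intro z
      have hdiff : DifferentiableAt ℝ F (t,x,y,z) :=
        (hF.contDiffAt (hU.mem_nhds (hmem y z))).differentiableAt (by simp)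
      exact ((hasDerivAt_sliceZ hdiff).ofReal_comp).mul_const (ec n y)
    have hcz : Continuous fun z : ℝ => (pD vZ F (t,x,y,z) : ℂ) * ec n y := by
      have hemb : Continuous (fun z : ℝ => ((t,x,y,z) : P4)) := by fun_prop
      have hcc : Continuous fun z : ℝ => pD vZ F (t,x,y,z) :=
        ((pD_contDiffOn hU hF vZ).continuousOn).comp_continuous hemb (fun z => hmem y z)
      exact (Complex.continuous_ofReal.comp hcc).mul continuous_const
    have hp : (fun z' => (F (t,x,y,z') : ℂ) * ec n y) π
        = (fun z' => (F (t,x,y,z') : ℂ) * ec n y) (-π) := by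
      simp only [hper y]
    exact integral_deriv_mul_ec p hu hcz hp
  simp_rw [hinner]
  rw [intervalIntegral.integral_const_mul]

/-- Integration by parts in `y`. -/
lemma JJ_pDey (n p : ℤ) {U : Set P4} (hU : IsOpen U) {F : P4 → ℝ}
    (hF : ContDiffOn ℝ (⊤ : ℕ∞) F U) {t x : ℝ} (hmem : ∀ y z : ℝ, ((t,x,y,z) : P4) ∈ U)
    (hper : ∀ z : ℝ, F (t,x,π,z) = F (t,x,-π,z)) :
    JJ n p (pD vY F) t x = Complex.I * n * JJ n p F t x := by
  have hembq : Continuous (fun yz : ℝ × ℝ => ((t,x,yz.1,yz.2) : P4)) := by fun_prop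
  have hcF : Continuous fun yz : ℝ × ℝ => F (t,x,yz.1,yz.2) :=
    (hF.continuousOn).comp_continuous hembq (fun yz => hmem yz.1 yz.2)
  have hcF' : Continuous fun yz : ℝ × ℝ => pD vY F (t,x,yz.1,yz.2) :=
    ((pD_contDiffOn hU hF vY).continuousOn).comp_continuous hembq (fun yz => hmem yz.1 yz.2)
  unfold JJ
  rw [double_swap (fun y z => (pD vY F (t,x,y,z) : ℂ) * ec n y * ec p z) (cont_integrand n p hcF'),
      double_swap (fun y z => (F (t,x,y,z) : ℂ) * ec n y * ec p z) (cont_integrand n p hcF)]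
  have hinner : ∀ z : ℝ, (∫ y in (-π:ℝ)..π, (pD vY F (t,x,y,z) : ℂ) * ec n y * ec p z)
      = Complex.I * n * ∫ y in (-π:ℝ)..π, (F (t,x,y,z) : ℂ) * ec n y * ec p z := by
    intro z
    have e1 : ∀ G' : P4 → ℝ, (fun y : ℝ => (G' (t,x,y,z) : ℂ) * ec n y * ec p z)
        = fun y : ℝ => ((G' (t,x,y,z) : ℂ) * ec p z) * ec n y := by
      intro G'; funext y; ring
    rw [e1, e1]
    have hu : ∀ y : ℝ, HasDerivAt (fun y' => (F (t,x,y',z) : ℂ) * ec p z)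
        ((pD vY F (t,x,y,z) : ℂ) * ec p z) y := by
      intro y
      have hdiff : DifferentiableAt ℝ F (t,x,y,z) :=
        (hF.contDiffAt (hU.mem_nhds (hmem y z))).differentiableAt (by simp)
      exact ((hasDerivAt_sliceY hdiff).ofReal_comp).mul_const (ec p z)
    have hcy : Continuous fun y : ℝ => (pD vY F (t,x,y,z) : ℂ) * ec p z := by
      have hemb : Continuous (fun y : ℝ => ((t,x,y,z) : P4)) := by fun_prop
      have hcc : Continuous fun y : ℝ => pD vY F (t,x,y,z) :=
        ((pD_contDiffOn hU hF vY).continuousOn).comp_continuous hemb (fun y => hmem y z)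
      exact (Complex.continuous_ofReal.comp hcc).mul continuous_const
    have hp : (fun y' => (F (t,x,y',z) : ℂ) * ec p z) π
        = (fun y' => (F (t,x,y',z) : ℂ) * ec p z) (-π) := by
      simp only [hper z]
    exact integral_deriv_mul_ec n hu hcy hp
  simp_rw [hinner]
  rw [intervalIntegral.integral_const_mul]

/-- `t`-derivative of `JJ`. -/
lemma hasDerivAt_JJ_t (n p : ℤ) {U : Set P4} (hU : IsOpen U) {F : P4 → ℝ}
    (hF : ContDiffOn ℝ (⊤ : ℕ∞) F U) {t x ε : ℝ} (hε : 0 < ε)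
    (hmem : ∀ s ∈ Metric.closedBall t ε, ∀ y z : ℝ, ((s,x,y,z) : P4) ∈ U) :
    HasDerivAt (fun s => JJ n p F s x) (JJ n p (pD vT F) t x) t := by
  unfold JJ
  apply hasDerivAt_double (F := fun s y z => (F (s,x,y,z) : ℂ) * ec n y * ec p z)
    (F' := fun s y z => (pD vT F (s,x,y,z) : ℂ) * ec n y * ec p z) hε
  · have hemb : Continuous (fun q : ℝ × ℝ × ℝ => ((q.1, x, q.2.1, q.2.2) : P4)) := by fun_prop
    have hc : ContinuousOn (fun q : ℝ × ℝ × ℝ => F (q.1, x, q.2.1, q.2.2))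
        (Metric.closedBall t ε ×ˢ (univ : Set (ℝ × ℝ))) :=
      hF.continuousOn.comp hemb.continuousOn (fun q hq => hmem q.1 hq.1 q.2.1 q.2.2)
    exact ((Complex.continuous_ofReal.comp_continuousOn hc).mul
        (((continuous_ec n).comp (by fun_prop : Continuous fun q : ℝ × ℝ × ℝ => q.2.1)).continuousOn)).mul
      (((continuous_ec p).comp (by fun_prop : Continuous fun q : ℝ × ℝ × ℝ => q.2.2)).continuousOn)
  · have hemb : Continuous (fun q : ℝ × ℝ × ℝ => ((q.1, x, q.2.1, q.2.2) : P4)) := by fun_prop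
    have hc : ContinuousOn (fun q : ℝ × ℝ × ℝ => pD vT F (q.1, x, q.2.1, q.2.2))
        (Metric.closedBall t ε ×ˢ (univ : Set (ℝ × ℝ))) :=
      (pD_contDiffOn hU hF vT).continuousOn.comp hemb.continuousOn
        (fun q hq => hmem q.1 hq.1 q.2.1 q.2.2)
    exact ((Complex.continuous_ofReal.comp_continuousOn hc).mul
        (((continuous_ec n).comp (by fun_prop : Continuous fun q : ℝ × ℝ × ℝ => q.2.1)).continuousOn)).mul
      (((continuous_ec p).comp (by fun_prop : Continuous fun q : ℝ × ℝ × ℝ => q.2.2)).continuousOn)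
  · intro s hs y z
    have hdiff : DifferentiableAt ℝ F (s,x,y,z) :=
      (hF.contDiffAt (hU.mem_nhds (hmem s (Metric.ball_subset_closedBall hs) y z))).differentiableAt (by simp)
    exact (((hasDerivAt_sliceT hdiff).ofReal_comp).mul_const (ec n y)).mul_const (ec p z)

/-- `x`-derivative of `JJ`. -/
lemma hasDerivAt_JJ_x (n p : ℤ) {U : Set P4} (hU : IsOpen U) {F : P4 → ℝ}
    (hF : ContDiffOn ℝ (⊤ : ℕ∞) F U) {t x ε : ℝ} (hε : 0 < ε)
    (hmem : ∀ x' ∈ Metric.closedBall x ε, ∀ y z : ℝ, ((t,x',y,z) : P4) ∈ U) :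
    HasDerivAt (fun x' => JJ n p F t x') (JJ n p (pD vX F) t x) x := by
  unfold JJ
  apply hasDerivAt_double (F := fun x' y z => (F (t,x',y,z) : ℂ) * ec n y * ec p z)
    (F' := fun x' y z => (pD vX F (t,x',y,z) : ℂ) * ec n y * ec p z) hε
  · have hemb : Continuous (fun q : ℝ × ℝ × ℝ => ((t, q.1, q.2.1, q.2.2) : P4)) := by fun_prop
    have hc : ContinuousOn (fun q : ℝ × ℝ × ℝ => F (t, q.1, q.2.1, q.2.2))
        (Metric.closedBall x ε ×ˢ (univ : Set (ℝ × ℝ))) :=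
      hF.continuousOn.comp hemb.continuousOn (fun q hq => hmem q.1 hq.1 q.2.1 q.2.2)
    exact ((Complex.continuous_ofReal.comp_continuousOn hc).mul
        (((continuous_ec n).comp (by fun_prop : Continuous fun q : ℝ × ℝ × ℝ => q.2.1)).continuousOn)).mul
      (((continuous_ec p).comp (by fun_prop : Continuous fun q : ℝ × ℝ × ℝ => q.2.2)).continuousOn)
  · have hemb : Continuous (fun q : ℝ × ℝ × ℝ => ((t, q.1, q.2.1, q.2.2) : P4)) := by fun_prop
    have hc : ContinuousOn (fun q : ℝ × ℝ × ℝ => pD vX F (t, q.1, q.2.1, q.2.2))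
        (Metric.closedBall x ε ×ˢ (univ : Set (ℝ × ℝ))) :=
      (pD_contDiffOn hU hF vX).continuousOn.comp hemb.continuousOn
        (fun q hq => hmem q.1 hq.1 q.2.1 q.2.2)
    exact ((Complex.continuous_ofReal.comp_continuousOn hc).mul
        (((continuous_ec n).comp (by fun_prop : Continuous fun q : ℝ × ℝ × ℝ => q.2.1)).continuousOn)).mul
      (((continuous_ec p).comp (by fun_prop : Continuous fun q : ℝ × ℝ × ℝ => q.2.2)).continuousOn)
  · intro s hs y z
    have hdiff : DifferentiableAt ℝ F (t,s,y,z) :=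
      (hF.contDiffAt (hU.mem_nhds (hmem s (Metric.ball_subset_closedBall hs) y z))).differentiableAt (by simp)
    exact (((hasDerivAt_sliceX hdiff).ofReal_comp).mul_const (ec n y)).mul_const (ec p z)


lemma fourier_eq (f : ℝ → ℝ → ℝ → ℝ → ℝ) (n p : ℤ) (t x : ℝ) :
    fourierCoeffYZ f n p t x
      = (1 / (2*π)^2 : ℂ) * JJ n p (fun q : P4 => f q.1 q.2.1 q.2.2.1 q.2.2.2) t x := by
  unfold fourierCoeffYZ JJ
  congr 1
  congr 1
  funext y
  congr 1
  funext z
  show (f t x y z : ℂ) * Complex.exp (-Complex.I * ((n:ℂ)*(y:ℂ) + (p:ℂ)*(z:ℂ)))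
      = (f t x y z : ℂ) * ec n y * ec p z
  rw [mul_assoc]
  congr 1
  unfold ec
  rw [← Complex.exp_add]
  congr 1
  ring

/-- The main PDE computation, in `fderiv` form. -/
lemma main (T : ℝ) (n p : ℤ) (G H : P4 → ℝ) {t x : ℝ}
    (ht : t ∈ Ioo (0:ℝ) T) (hx : x ∈ Ioo (-1:ℝ) 1)
    (hGU : ContDiffOn ℝ (⊤ : ℕ∞) G (Ioo (0:ℝ) T ×ˢ (Ioo (-1:ℝ) 1 ×ˢ (univ : Set (ℝ × ℝ)))))
    (hHc : Continuous fun yz : ℝ × ℝ => H (t,x,yz.1,yz.2))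
    (hGpY : ∀ q : P4, G (q + ((0:ℝ),(0:ℝ),2*π,(0:ℝ))) = G q)
    (hGpZ : ∀ q : P4, G (q + ((0:ℝ),(0:ℝ),(0:ℝ),2*π)) = G q)
    (hpde : ∀ y z : ℝ, pD vT G (t,x,y,z)
      = pD vX (pD vX G) (t,x,y,z) + WH (WH G) (t,x,y,z) + H (t,x,y,z)) :
    deriv (fun s => (1/(2*π)^2 : ℂ) * JJ n p G s x) t
      - deriv (deriv fun x' => (1/(2*π)^2 : ℂ) * JJ n p G t x') x
      + ((((p:ℝ)*x + (n:ℝ))^2 : ℝ) : ℂ) * ((1/(2*π)^2 : ℂ) * JJ n p G t x)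
    = (1/(2*π)^2 : ℂ) * JJ n p H t x := by
  set U : Set P4 := Ioo (0:ℝ) T ×ˢ (Ioo (-1:ℝ) 1 ×ˢ (univ : Set (ℝ × ℝ))) with hUdef
  have hUopen : IsOpen U := isOpen_Ioo.prod (isOpen_Ioo.prod isOpen_univ)
  have hmem : ∀ y z : ℝ, ((t,x,y,z) : P4) ∈ U := fun y z => ⟨ht, hx, mem_univ _⟩
  have hembq : Continuous (fun yz : ℝ × ℝ => ((t,x,yz.1,yz.2) : P4)) := by fun_prop
  have hsl : ∀ {F : P4 → ℝ}, ContDiffOn ℝ (⊤ : ℕ∞) F U →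
      Continuous fun yz : ℝ × ℝ => F (t,x,yz.1,yz.2) := fun {F} hF =>
    hF.continuousOn.comp_continuous hembq (fun yz => hmem yz.1 yz.2)
  have hGxsm := pD_contDiffOn hUopen hGU vX
  have hGxxsm := pD_contDiffOn hUopen hGxsm vX
  have hWGsm := WH_contDiffOn hUopen hGU
  have hWWGsm := WH_contDiffOn hUopen hWGsm
  have hπ : -π + 2*π = π := by ring
  have hYpt : ∀ z : ℝ, ((t,x,-π,z) : P4) + ((0:ℝ),(0:ℝ),2*π,(0:ℝ)) = ((t,x,π,z) : P4) := by
    intro z; simp [Prod.mk_add_mk, hπ]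
  have hZpt : ∀ y : ℝ, ((t,x,y,-π) : P4) + ((0:ℝ),(0:ℝ),(0:ℝ),2*π) = ((t,x,y,π) : P4) := by
    intro y; simp [Prod.mk_add_mk, hπ]
  have hGvalY : ∀ z : ℝ, G (t,x,π,z) = G (t,x,-π,z) := fun z => by rw [← hYpt z, hGpY]
  have hGvalZ : ∀ y : ℝ, G (t,x,y,π) = G (t,x,y,-π) := fun y => by rw [← hZpt y, hGpZ]
  have hWGvalY : ∀ z : ℝ, WH G (t,x,π,z) = WH G (t,x,-π,z) := fun z => by
    rw [← hYpt z]
    exact WH_per hUopen hGU rfl hGpY (by rw [hYpt z]; exact hmem π z)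
  have hWGvalZ : ∀ y : ℝ, WH G (t,x,y,π) = WH G (t,x,y,-π) := fun y => by
    rw [← hZpt y]
    exact WH_per hUopen hGU rfl hGpZ (by rw [hZpt y]; exact hmem y π)
  -- integration by parts identities
  have hJWG : JJ n p (WH G) t x = Complex.I * ((p:ℂ)*x + n) * JJ n p G t x := by
    have e0 : JJ n p (WH G) t x = JJ n p (fun q => x * pD vZ G q + pD vY G q) t x :=
      JJ_congr n p t x (fun y z => rfl)
    rw [e0, JJ_add n p (fun q => x * pD vZ G q) (pD vY G) t x
        (continuous_const.mul (hsl (pD_contDiffOn hUopen hGU vZ)))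
        (hsl (pD_contDiffOn hUopen hGU vY)),
      JJ_smul n p x (pD vZ G) t x,
      JJ_pDez n p hUopen hGU hmem hGvalZ,
      JJ_pDey n p hUopen hGU hmem hGvalY]
    ring
  have hJWWG : JJ n p (WH (WH G)) t x = Complex.I * ((p:ℂ)*x + n) * JJ n p (WH G) t x := by
    have e0 : JJ n p (WH (WH G)) t x
        = JJ n p (fun q => x * pD vZ (WH G) q + pD vY (WH G) q) t x :=
      JJ_congr n p t x (fun y z => rfl)
    rw [e0, JJ_add n p (fun q => x * pD vZ (WH G) q) (pD vY (WH G)) t x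
        (continuous_const.mul (hsl (pD_contDiffOn hUopen hWGsm vZ)))
        (hsl (pD_contDiffOn hUopen hWGsm vY)),
      JJ_smul n p x (pD vZ (WH G)) t x,
      JJ_pDez n p hUopen hWGsm hmem hWGvalZ,
      JJ_pDey n p hUopen hWGsm hmem hWGvalY]
    ring
  have hWW : JJ n p (WH (WH G)) t x = -(((p:ℂ)*x + n)^2) * JJ n p G t x := by
    rw [hJWWG, hJWG, show Complex.I * ((p:ℂ)*x+n) * (Complex.I * ((p:ℂ)*x+n) * JJ n p G t x)
      = (Complex.I*Complex.I) * (((p:ℂ)*x+n)^2 * JJ n p G t x) by ring, Complex.I_mul_I]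
    ring
  -- splitting the PDE under the integral
  have hsplit : JJ n p (pD vT G) t x
      = JJ n p (pD vX (pD vX G)) t x + JJ n p (WH (WH G)) t x + JJ n p H t x := by
    have e0 : JJ n p (pD vT G) t x
        = JJ n p (fun q => (pD vX (pD vX G) q + WH (WH G) q) + H q) t x :=
      JJ_congr n p t x (fun y z => by rw [hpde y z])
    rw [e0, JJ_add n p (fun q => pD vX (pD vX G) q + WH (WH G) q) H t x
        ((hsl hGxxsm).add (hsl hWWGsm)) hHc,
      JJ_add n p (pD vX (pD vX G)) (WH (WH G)) t x (hsl hGxxsm) (hsl hWWGsm)]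
  -- derivative in t
  have hJt : HasDerivAt (fun s => JJ n p G s x) (JJ n p (pD vT G) t x) t := by
    have hεpos : 0 < min t (T - t) / 2 := by
      have h1 : 0 < min t (T - t) := lt_min ht.1 (by linarith [ht.2])
      linarith
    apply hasDerivAt_JJ_t n p hUopen hGU hεpos
    intro s hs y z
    rw [Metric.mem_closedBall, Real.dist_eq] at hs
    have h1 := abs_le.1 hs
    have he1 : min t (T-t) / 2 ≤ t/2 := by have := min_le_left t (T-t); linarith
    have he2 : min t (T-t) / 2 ≤ (T-t)/2 := by have := min_le_right t (T-t); linarith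
    have h0t : 0 < t := ht.1
    exact ⟨⟨by linarith [h1.1], by linarith [h1.2, ht.2]⟩, hx, mem_univ _⟩
  -- derivative in x (at arbitrary interior points)
  have hJx : ∀ x' ∈ Ioo (-1:ℝ) 1,
      HasDerivAt (fun x'' => JJ n p G t x'') (JJ n p (pD vX G) t x') x' := by
    intro x' hx'
    have hεpos : 0 < min (x'+1) (1-x') / 2 := by
      have h1 : 0 < min (x'+1) (1-x') := lt_min (by linarith [hx'.1]) (by linarith [hx'.2])
      linarith
    apply hasDerivAt_JJ_x n p hUopen hGU hεpos
    intro s hs y z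
    rw [Metric.mem_closedBall, Real.dist_eq] at hs
    have h1 := abs_le.1 hs
    have he1 : min (x'+1) (1-x') / 2 ≤ (x'+1)/2 := by have := min_le_left (x'+1) (1-x'); linarith
    have he2 : min (x'+1) (1-x') / 2 ≤ (1-x')/2 := by have := min_le_right (x'+1) (1-x'); linarith
    exact ⟨ht, ⟨by linarith [h1.1], by linarith [h1.2]⟩, mem_univ _⟩
  have hJxx : HasDerivAt (fun x' => JJ n p (pD vX G) t x') (JJ n p (pD vX (pD vX G)) t x) x := by
    have hεpos : 0 < min (x+1) (1-x) / 2 := by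
      have h1 : 0 < min (x+1) (1-x) := lt_min (by linarith [hx.1]) (by linarith [hx.2])
      linarith
    apply hasDerivAt_JJ_x n p hUopen hGxsm hεpos
    intro s hs y z
    rw [Metric.mem_closedBall, Real.dist_eq] at hs
    have h1 := abs_le.1 hs
    have he1 : min (x+1) (1-x) / 2 ≤ (x+1)/2 := by have := min_le_left (x+1) (1-x); linarith
    have he2 : min (x+1) (1-x) / 2 ≤ (1-x)/2 := by have := min_le_right (x+1) (1-x); linarith
    exact ⟨ht, ⟨by linarith [h1.1], by linarith [h1.2]⟩, mem_univ _⟩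
  set c : ℂ := (1/(2*π)^2 : ℂ) with hcdef
  have hd1 : deriv (fun s => c * JJ n p G s x) t = c * JJ n p (pD vT G) t x :=
    (hJt.const_mul c).deriv
  have hdx : (deriv fun x' => c * JJ n p G t x') =ᶠ[nhds x]
      fun x' => c * JJ n p (pD vX G) t x' := by
    filter_upwards [Ioo_mem_nhds hx.1 hx.2] with x' hx'
    exact ((hJx x' hx').const_mul c).deriv
  have hd2 : deriv (deriv fun x' => c * JJ n p G t x') x
      = c * JJ n p (pD vX (pD vX G)) t x := by
    rw [hdx.deriv_eq]
    exact (hJxx.const_mul c).deriv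
  rw [hd1, hd2, hsplit, hWW]
  have hβ : ((((p:ℝ)*x + (n:ℝ))^2 : ℝ) : ℂ) = ((p:ℂ)*x + (n:ℂ))^2 := by push_cast; ring
  rw [hβ]
  ring

end HeisenAux

open HeisenAux

/-- the Fourier coefficients `g_{n,p}` of a classical solution of the
Heisenberg heat equation with source `h̃` solve the 1D heat equation with parameters
`(n,p)` and source `h̃_{n,p}`: they vanish at `x = ±1` and satisfy
`∂_t g_{n,p} − ∂_x² g_{n,p} + (px+n)² g_{n,p} = h̃_{n,p}` on `(0,T)×(-1,1)`. -/
theorem heisenberg_fourier_decomposition (T : ℝ) (hT : 0 < T)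
    (h g : ℝ → ℝ → ℝ → ℝ → ℝ)
    (hcont : ContinuousOn (fun q : ℝ × ℝ × ℝ × ℝ => h q.1 q.2.1 q.2.2.1 q.2.2.2)
      (Set.Icc 0 T ×ˢ (Set.Icc (-1:ℝ) 1 ×ˢ (Set.univ : Set (ℝ × ℝ)))))
    (hper : ∀ t x y z, h t x (y + 2 * π) z = h t x y z ∧ h t x y (z + 2 * π) = h t x y z)
    (hsol : IsHeisenbergSol T h g) :
    ∀ n p : ℤ,
      (∀ t ∈ Set.Icc (0:ℝ) T,
        fourierCoeffYZ g n p t (-1) = 0 ∧ fourierCoeffYZ g n p t 1 = 0) ∧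
      ∀ t ∈ Set.Ioo (0:ℝ) T, ∀ x ∈ Set.Ioo (-1:ℝ) 1,
        deriv (fun s => fourierCoeffYZ g n p s x) t
            - deriv (deriv fun x' => fourierCoeffYZ g n p t x') x
            + ((((p : ℝ) * x + (n : ℝ)) ^ 2 : ℝ) : ℂ) * fourierCoeffYZ g n p t x
          = fourierCoeffYZ h n p t x := by
  obtain ⟨hGc, hGsm, hGper, hGbd, hGpde⟩ := hsol
  intro n p
  constructor
  · intro t ht
    constructor
    · have h0 : ∀ y z : ℝ, ((g t (-1) y z : ℝ) : ℂ) = 0 := fun y z => by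
        rw [(hGbd t y z).1]; exact Complex.ofReal_zero
      unfold fourierCoeffYZ
      simp only [h0, zero_mul, intervalIntegral.integral_zero, mul_zero]
    · have h0 : ∀ y z : ℝ, ((g t 1 y z : ℝ) : ℂ) = 0 := fun y z => by
        rw [(hGbd t y z).2]; exact Complex.ofReal_zero
      unfold fourierCoeffYZ
      simp only [h0, zero_mul, intervalIntegral.integral_zero, mul_zero]
  · intro t ht x hx
    have hUopen : IsOpen (Ioo (0:ℝ) T ×ˢ (Ioo (-1:ℝ) 1 ×ˢ (univ : Set (ℝ × ℝ)))) :=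
      isOpen_Ioo.prod (isOpen_Ioo.prod isOpen_univ)
    have hGU : ContDiffOn ℝ (⊤ : ℕ∞) (fun q : P4 => g q.1 q.2.1 q.2.2.1 q.2.2.2)
        (Ioo (0:ℝ) T ×ˢ (Ioo (-1:ℝ) 1 ×ˢ (univ : Set (ℝ × ℝ)))) :=
      hGsm.mono (fun q hq => ⟨Ioo_subset_Ioc_self hq.1, Ioo_subset_Icc_self hq.2.1, mem_univ _⟩)
    have hmem : ∀ y z : ℝ, ((t,x,y,z) : P4) ∈
        (Ioo (0:ℝ) T ×ˢ (Ioo (-1:ℝ) 1 ×ˢ (univ : Set (ℝ × ℝ)))) := fun y z =>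
      ⟨ht, hx, mem_univ _⟩
    have hdiffU : ∀ {F : P4 → ℝ}, ContDiffOn ℝ (⊤ : ℕ∞) F
        (Ioo (0:ℝ) T ×ˢ (Ioo (-1:ℝ) 1 ×ˢ (univ : Set (ℝ × ℝ)))) → ∀ {q : P4},
        q ∈ (Ioo (0:ℝ) T ×ˢ (Ioo (-1:ℝ) 1 ×ˢ (univ : Set (ℝ × ℝ)))) →
        DifferentiableAt ℝ F q := fun {F} hF {q} hq =>
      (hF.contDiffAt (hUopen.mem_nhds hq)).differentiableAt (by simp)
    have hGxsm := pD_contDiffOn hUopen hGU vX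
    have hWGsm := WH_contDiffOn hUopen hGU
    -- periodicity in q-form
    have hGpY : ∀ q : P4, (fun q : P4 => g q.1 q.2.1 q.2.2.1 q.2.2.2)
        (q + ((0:ℝ),(0:ℝ),2*π,(0:ℝ))) = (fun q : P4 => g q.1 q.2.1 q.2.2.1 q.2.2.2) q := by
      intro q
      obtain ⟨a, b, cc, d⟩ := q
      show g (a+0) (b+0) (cc+2*π) (d+0) = g a b cc d
      simp only [add_zero]
      exact (hGper a b cc d).1
    have hGpZ : ∀ q : P4, (fun q : P4 => g q.1 q.2.1 q.2.2.1 q.2.2.2)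
        (q + ((0:ℝ),(0:ℝ),(0:ℝ),2*π)) = (fun q : P4 => g q.1 q.2.1 q.2.2.1 q.2.2.2) q := by
      intro q
      obtain ⟨a, b, cc, d⟩ := q
      show g (a+0) (b+0) (cc+0) (d+2*π) = g a b cc d
      simp only [add_zero]
      exact (hGper a b cc d).2
    -- continuity of the source slice
    have hembq : Continuous (fun yz : ℝ × ℝ => ((t,x,yz.1,yz.2) : P4)) := by fun_prop
    have hHc : Continuous fun yz : ℝ × ℝ => h t x yz.1 yz.2 :=
      hcont.comp_continuous hembq (fun yz =>
        ⟨⟨ht.1.le, ht.2.le⟩, ⟨hx.1.le, hx.2.le⟩, mem_univ _⟩)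
    -- slice-derivative identities
    have hGt : ∀ y z : ℝ, deriv (fun s => g s x y z) t
        = pD vT (fun q : P4 => g q.1 q.2.1 q.2.2.1 q.2.2.2) (t,x,y,z) := fun y z =>
      (hasDerivAt_sliceT (hdiffU hGU (hmem y z))).deriv
    have hGxx : ∀ y z : ℝ, deriv (deriv fun x' => g t x' y z) x
        = pD vX (pD vX (fun q : P4 => g q.1 q.2.1 q.2.2.1 q.2.2.2)) (t,x,y,z) := by
      intro y z
      have hev : (deriv fun x' => g t x' y z) =ᶠ[nhds x]
          fun x' => pD vX (fun q : P4 => g q.1 q.2.1 q.2.2.1 q.2.2.2) (t,x',y,z) := by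
        filter_upwards [Ioo_mem_nhds hx.1 hx.2] with x' hx'
        exact (hasDerivAt_sliceX (hdiffU hGU ⟨ht, hx', mem_univ _⟩)).deriv
      rw [hev.deriv_eq]
      exact (hasDerivAt_sliceX (hdiffU hGxsm (hmem y z))).deriv
    have hXH : ∀ y z : ℝ, XH g t x y z
        = WH (fun q : P4 => g q.1 q.2.1 q.2.2.1 q.2.2.2) (t,x,y,z) := by
      intro y z
      have h1 : deriv (fun z' => g t x y z') z
          = pD vZ (fun q : P4 => g q.1 q.2.1 q.2.2.1 q.2.2.2) (t,x,y,z) :=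
        (hasDerivAt_sliceZ (hdiffU hGU (hmem y z))).deriv
      have h2 : deriv (fun y' => g t x y' z) y
          = pD vY (fun q : P4 => g q.1 q.2.1 q.2.2.1 q.2.2.2) (t,x,y,z) :=
        (hasDerivAt_sliceY (hdiffU hGU (hmem y z))).deriv
      show x * deriv (fun z' => g t x y z') z + deriv (fun y' => g t x y' z) y = _
      rw [h1, h2]
      rfl
    have hXX : ∀ y z : ℝ, XH (XH g) t x y z
        = WH (WH (fun q : P4 => g q.1 q.2.1 q.2.2.1 q.2.2.2)) (t,x,y,z) := by
      intro y z
      have e1 : (fun z' => XH g t x y z')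
          = fun z' => WH (fun q : P4 => g q.1 q.2.1 q.2.2.1 q.2.2.2) (t,x,y,z') :=
        funext fun z' => hXH y z'
      have e2 : (fun y' => XH g t x y' z)
          = fun y' => WH (fun q : P4 => g q.1 q.2.1 q.2.2.1 q.2.2.2) (t,x,y',z) :=
        funext fun y' => hXH y' z
      have h1 : deriv (fun z' => XH g t x y z') z
          = pD vZ (WH (fun q : P4 => g q.1 q.2.1 q.2.2.1 q.2.2.2)) (t,x,y,z) := by
        rw [e1]; exact (hasDerivAt_sliceZ (hdiffU hWGsm (hmem y z))).deriv
      have h2 : deriv (fun y' => XH g t x y' z) y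
          = pD vY (WH (fun q : P4 => g q.1 q.2.1 q.2.2.1 q.2.2.2)) (t,x,y,z) := by
        rw [e2]; exact (hasDerivAt_sliceY (hdiffU hWGsm (hmem y z))).deriv
      show x * deriv (fun z' => XH g t x y z') z + deriv (fun y' => XH g t x y' z) y = _
      rw [h1, h2]
      rfl
    -- the PDE in fderiv form
    have hpde : ∀ y z : ℝ,
        pD vT (fun q : P4 => g q.1 q.2.1 q.2.2.1 q.2.2.2) (t,x,y,z)
        = pD vX (pD vX (fun q : P4 => g q.1 q.2.1 q.2.2.1 q.2.2.2)) (t,x,y,z)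
          + WH (WH (fun q : P4 => g q.1 q.2.1 q.2.2.1 q.2.2.2)) (t,x,y,z)
          + (fun q : P4 => h q.1 q.2.1 q.2.2.1 q.2.2.2) (t,x,y,z) := by
      intro y z
      have hp := hGpde t ht x hx y z
      rw [hGt y z, hGxx y z, hXX y z] at hp
      exact hp
    -- rewrite the goal in `JJ` form
    have e1 : (fun s => fourierCoeffYZ g n p s x)
        = fun s => (1/(2*π)^2 : ℂ) * JJ n p (fun q : P4 => g q.1 q.2.1 q.2.2.1 q.2.2.2) s x :=
      funext fun s => fourier_eq g n p s x
    have e2 : (fun x' => fourierCoeffYZ g n p t x')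
        = fun x' => (1/(2*π)^2 : ℂ) * JJ n p (fun q : P4 => g q.1 q.2.1 q.2.2.1 q.2.2.2) t x' :=
      funext fun x' => fourier_eq g n p t x'
    rw [e1, e2, fourier_eq g n p t x, fourier_eq h n p t x]
    exact main T n p (fun q : P4 => g q.1 q.2.1 q.2.2.1 q.2.2.2)
      (fun q : P4 => h q.1 q.2.1 q.2.2.1 q.2.2.2) ht hx hGU hHc hGpY hGpZ hpde
end
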